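/- (Theorem 1, counterfactual means, outcome regression.) Under the sensitivity parametrization, E[(1−Z)·Y(1)] = E[(1−Z)·μ1(X)/ε1(X)] and E[Z·Y(0)] = E[Z·μ0(X)·ε0(X)]; equivalently, E[Y(1) ∣ Z=0] = E[μ1(X)/ε1(X) ∣ Z=0] and E[Y(0) ∣ Z=1] = E[μ0(X)·ε0(X) ∣ Z=1] whenever P(Z=0) > 0 and P(Z=1) > 0. -/

import Mathlib

/-!
Since `Z` is binary, `Z·Y = Z·Y(1)` and `(1 - Z)·Y = (1 - Z)·Y(0)`, so the outcome regressions
identify `E[Z·Y(1) | X] = μ₁·e` and `E[(1 - Z)·Y(0) | X] = μ₀·(1 - e)`. The sensitivity relations,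
divided by `ε₁·e` resp. `1 - e` (nonzero by overlap), turn these into
`E[(1 - Z)·Y(1) | X] = E[1 - Z | X]·μ₁/ε₁` and `E[Z·Y(0) | X] = E[Z | X]·μ₀·ε₀`.
Taking expectations and pulling the `X`-measurable factors back inside the conditional
expectation gives the two identities; conditioning on `Z = 0` or `Z = 1` only rescales both
sides by the same constant.
-/

open MeasureTheory ProbabilityTheory

section

variable {Ω : Type*} {m mΩ : MeasurableSpace Ω} {P : Measure Ω}

theorem integral_eq_integral_mul_of_condExp_ae_eq_mul [IsFiniteMeasure P] (hm : m ≤ mΩ)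
    {V W g : Ω → ℝ} (hg : AEStronglyMeasurable[m] g P) (hW : Integrable W P)
    (hWg : Integrable (W * g) P) (hV : P[V|m] =ᵐ[P] P[W|m] * g) :
    ∫ ω, V ω ∂P = ∫ ω, W ω * g ω ∂P :=
  calc ∫ ω, V ω ∂P = ∫ ω, P[V|m] ω ∂P := (integral_condExp hm).symm
    _ = ∫ ω, P[W * g|m] ω ∂P :=
      integral_congr_ae (hV.trans (condExp_mul_of_aestronglyMeasurable_right hg hWg hW).symm)
    _ = ∫ ω, W ω * g ω ∂P := integral_condExp hm

theorem condExp_one_sub [IsFiniteMeasure P] (hm : m ≤ mΩ) {Z : Ω → ℝ} (hZ : Integrable Z P) :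
    P[fun ω => 1 - Z ω|m] =ᵐ[P] fun ω => 1 - P[Z|m] ω := by
  filter_upwards [condExp_sub (integrable_const 1) hZ m] with ω h
  rwa [Pi.sub_apply, condExp_const hm] at h

theorem integral_cond_eq_of_integral_indicator_eq {s : Set Ω} (hs : MeasurableSet s)
    {f g : Ω → ℝ} (h : ∫ ω, s.indicator f ω ∂P = ∫ ω, s.indicator g ω ∂P) :
    ∫ ω, f ω ∂P[|s] = ∫ ω, g ω ∂P[|s] := by
  rw [integral_indicator hs, integral_indicator hs] at h
  simp only [ProbabilityTheory.cond, integral_smul_measure, h]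

variable {Z : Ω → ℝ}

theorem integrable_of_zero_or_one [IsFiniteMeasure P] (hZm : Measurable Z)
    (hZ : ∀ ω, Z ω = 0 ∨ Z ω = 1) : Integrable Z P :=
  .of_bound hZm.aestronglyMeasurable 1 (ae_of_all _ fun ω => by rcases hZ ω with h | h <;> simp [h])

theorem mul_eq_indicator_of_zero_or_one (hZ : ∀ ω, Z ω = 0 ∨ Z ω = 1) (f : Ω → ℝ) :
    (fun ω => Z ω * f ω) = {ω | Z ω = 1}.indicator f := by
  funext ω
  rcases hZ ω with h | h <;> simp [h]

theorem one_sub_mul_eq_indicator_of_zero_or_one (hZ : ∀ ω, Z ω = 0 ∨ Z ω = 1) (f : Ω → ℝ) :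
    (fun ω => (1 - Z ω) * f ω) = {ω | Z ω = 0}.indicator f := by
  funext ω
  rcases hZ ω with h | h <;> simp [h]

end

theorem mul_switch_of_zero_or_one {z a b : ℝ} (hz : z = 0 ∨ z = 1) :
    z * (z * a + (1 - z) * b) = z * a := by
  rcases hz with rfl | rfl <;> ring

theorem one_sub_mul_switch_of_zero_or_one {z a b : ℝ} (hz : z = 0 ∨ z = 1) :
    (1 - z) * (z * a + (1 - z) * b) = (1 - z) * b := by
  rcases hz with rfl | rfl <;> ring

theorem eq_one_sub_mul_div_of_mul_eq {e ε μ b : ℝ} (he : e ≠ 0) (hε : ε ≠ 0)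
    (h : (1 - e) * (μ * e) = ε * e * b) : b = (1 - e) * (μ / ε) := by
  refine mul_left_cancel₀ (mul_ne_zero hε he) (h.symm.trans ?_)
  field_simp

theorem eq_mul_mul_of_mul_eq {e ε μ a : ℝ} (he : e ≠ 1)
    (h : (1 - e) * a = ε * e * (μ * (1 - e))) : a = e * (μ * ε) := by
  refine mul_left_cancel₀ (sub_ne_zero.2 he.symm) (h.trans ?_)
  ring

theorem counterfactual_means_outcome_regression
    {Ω : Type*} [F : MeasurableSpace Ω] (P : Measure Ω) [IsProbabilityMeasure P]
    (Z Y1 Y0 Y : Ω → ℝ)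
    (hZmeas : Measurable Z) (hZ01 : ∀ ω, Z ω = 0 ∨ Z ω = 1)
    (hYdef : ∀ ω, Y ω = Z ω * Y1 ω + (1 - Z ω) * Y0 ω)
    (mX : MeasurableSpace Ω) (hmX : mX ≤ F)
    (eX : Ω → ℝ) (heX : eX =ᵐ[P] P[Z|mX])
    (hov : ∀ᵐ ω ∂P, 0 < eX ω ∧ eX ω < 1)
    (mu1 mu0 : Ω → ℝ) (hmu1meas : Measurable[mX] mu1) (hmu0meas : Measurable[mX] mu0)
    (hmu1 : (fun ω => mu1 ω * eX ω) =ᵐ[P] P[fun ω => Z ω * Y ω|mX])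
    (hmu0 : (fun ω => mu0 ω * (1 - eX ω)) =ᵐ[P] P[fun ω => (1 - Z ω) * Y ω|mX])
    (eps1 eps0 : Ω → ℝ)
    (heps1meas : Measurable[mX] eps1) (heps0meas : Measurable[mX] eps0)
    (heps1pos : ∀ᵐ ω ∂P, 0 < eps1 ω)
    (hsens1 : ∀ᵐ ω ∂P, (1 - eX ω) * (P[fun ω' => Z ω' * Y1 ω'|mX]) ω
        = eps1 ω * eX ω * (P[fun ω' => (1 - Z ω') * Y1 ω'|mX]) ω)
    (hsens0 : ∀ᵐ ω ∂P, (1 - eX ω) * (P[fun ω' => Z ω' * Y0 ω'|mX]) ω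
        = eps0 ω * eX ω * (P[fun ω' => (1 - Z ω') * Y0 ω'|mX]) ω)
    (hint2 : Integrable (fun ω => (1 - Z ω) * (mu1 ω / eps1 ω)) P)
    (hint4 : Integrable (fun ω => Z ω * (mu0 ω * eps0 ω)) P) :
    (∫ ω, (1 - Z ω) * Y1 ω ∂P = ∫ ω, (1 - Z ω) * (mu1 ω / eps1 ω) ∂P)
    ∧ (∫ ω, Z ω * Y0 ω ∂P = ∫ ω, Z ω * (mu0 ω * eps0 ω) ∂P)
    ∧ (0 < P {ω | Z ω = 0} → 0 < P {ω | Z ω = 1} →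
        (∫ ω, Y1 ω ∂(ProbabilityTheory.cond P {ω | Z ω = 0})
          = ∫ ω, mu1 ω / eps1 ω ∂(ProbabilityTheory.cond P {ω | Z ω = 0}))
        ∧ (∫ ω, Y0 ω ∂(ProbabilityTheory.cond P {ω | Z ω = 1})
          = ∫ ω, mu0 ω * eps0 ω ∂(ProbabilityTheory.cond P {ω | Z ω = 1}))) := by
  have hZint : Integrable Z P := integrable_of_zero_or_one hZmeas hZ01
  have hZY : (fun ω => Z ω * Y ω) = fun ω => Z ω * Y1 ω :=
    funext fun ω => by rw [hYdef]; exact mul_switch_of_zero_or_one (hZ01 ω)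
  have hZY' : (fun ω => (1 - Z ω) * Y ω) = fun ω => (1 - Z ω) * Y0 ω :=
    funext fun ω => by rw [hYdef]; exact one_sub_mul_switch_of_zero_or_one (hZ01 ω)
  rw [hZY] at hmu1
  rw [hZY'] at hmu0
  have hY1 : ∫ ω, (1 - Z ω) * Y1 ω ∂P = ∫ ω, (1 - Z ω) * (mu1 ω / eps1 ω) ∂P := by
    refine integral_eq_integral_mul_of_condExp_ae_eq_mul hmX
      (hmu1meas.div heps1meas).aestronglyMeasurable ((integrable_const 1).sub hZint) hint2 ?_
    filter_upwards [hsens1, hmu1, condExp_one_sub hmX hZint, heX, hov, heps1pos]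
      with ω hs hc hZ he ho hε
    rw [Pi.mul_apply, hZ, ← he]
    exact eq_one_sub_mul_div_of_mul_eq ho.1.ne' hε.ne' (hc ▸ hs)
  have hY0 : ∫ ω, Z ω * Y0 ω ∂P = ∫ ω, Z ω * (mu0 ω * eps0 ω) ∂P := by
    refine integral_eq_integral_mul_of_condExp_ae_eq_mul hmX
      (hmu0meas.mul heps0meas).aestronglyMeasurable hZint hint4 ?_
    filter_upwards [hsens0, hmu0, heX, hov] with ω hs hc he ho
    rw [Pi.mul_apply, ← he]
    exact eq_mul_mul_of_mul_eq ho.2.ne (hc ▸ hs)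
  refine ⟨hY1, hY0, fun _ _ => ⟨?_, ?_⟩⟩
  · rw [one_sub_mul_eq_indicator_of_zero_or_one hZ01,
      one_sub_mul_eq_indicator_of_zero_or_one hZ01] at hY1
    exact integral_cond_eq_of_integral_indicator_eq (hZmeas (measurableSet_singleton 0)) hY1
  · rw [mul_eq_indicator_of_zero_or_one hZ01, mul_eq_indicator_of_zero_or_one hZ01] at hY0
    exact integral_cond_eq_of_integral_indicator_eq (hZmeas (measurableSet_singleton 1)) hY0
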